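/- Let η ∈ {A,B,C}^{ℤ/Nℤ} and for x in ℤ/Nℤ let η^{x,x+1} denote the configuration with the values at x and x+1 swapped. Let c^{αβ} (α ≠ β ∈ {A,B,C}) be nonnegative rates satisfying the pairwise balance c^{AB} + c^{BC} + c^{CA} = c^{BA} + c^{CB} + c^{AC}, set c_x(η) = Σ_{α≠β} c^{αβ} 1_{η(x)=α} 1_{η(x+1)=β}, and let L f(η) = Σ_x c_x(η)[f(η^{x,x+1}) − f(η)]. Then any probability measure μ on {A,B,C}^{ℤ/Nℤ} that is invariant under each transposition, μ(η^{x,x+1}) = μ(η) for all η and x, satisfies Σ_η μ(η) L f(η) = 0 for every f; i.e. μ is invariant for the generator L. -/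

import Mathlib

inductive Species where
  | A | B | C
deriving DecidableEq

instance : Fintype Species :=
  ⟨{Species.A, Species.B, Species.C}, fun x => by cases x <;> simp⟩

open Species

instance : MeasurableSpace Species := ⊤

/-- The configuration obtained from `η` by exchanging the particles at sites `x` and
`x+1` of the discrete ring `ℤ/Nℤ`. -/
def swapConf {N : ℕ} (η : ZMod N → Species) (x : ZMod N) : ZMod N → Species :=
  fun z => if z = x then η (x + 1) else if z = x + 1 then η x else η z

/-- The jump rate at the bond `{x, x+1}`: `c_x(η) = Σ_{α≠β} c^{αβ} 1_{η(x)=α} 1_{η(x+1)=β}`. -/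
noncomputable def bondRate {N : ℕ} (crate : Species → Species → ℝ)
    (η : ZMod N → Species) (x : ZMod N) : ℝ :=
  ∑ α : Species, ∑ β : Species,
    (if α = β then 0 else crate α β)
      * (if η x = α then 1 else 0) * (if η (x + 1) = β then 1 else 0)

/-- The generator `L f(η) = Σ_x c_x(η)[f(η^{x,x+1}) − f(η)]`. -/
noncomputable def generator {N : ℕ} [NeZero N] (crate : Species → Species → ℝ)
    (f : (ZMod N → Species) → ℝ) (η : ZMod N → Species) : ℝ :=
  ∑ x : ZMod N, bondRate crate η x * (f (swapConf η x) - f η)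

/-! Reindexing by the involution `η ↦ η^{x,x+1}`, which preserves `μ`, turns the bond-`x` part of
`Σ_η μ(η) L f(η)` into `Σ_η μ(η) f(η) (c_x(η^{x,x+1}) - c_x(η))`. Pairwise balance says that
`c^{βα} - c^{αβ} = h(α) - h(β)` for a potential `h` on the species, so this rate difference is
`h(η(x)) - h(η(x+1))`, which telescopes to zero when summed around the ring. -/

theorem sum_mul_mul_sub_comp_of_involutive {X R : Type*} [Fintype X] [CommRing R]
    {σ : X → X} (hσ : Function.Involutive σ) {μ : X → R} (hμ : ∀ η, μ (σ η) = μ η)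
    (r f : X → R) :
    ∑ η, μ η * (r η * (f (σ η) - f η)) = ∑ η, μ η * f η * (r (σ η) - r η) := by
  have hreindex : ∑ η, μ η * r η * f (σ η) = ∑ η, μ η * r (σ η) * f η :=
    Fintype.sum_equiv (hσ.toPerm σ) _ _ fun η => by simp [hσ η, hμ]
  simp only [mul_sub, Finset.sum_sub_distrib, ← mul_assoc, hreindex]
  congr 1 <;> exact Finset.sum_congr rfl fun η _ => by ring

theorem sum_sub_comp_add_eq_zero {G M : Type*} [AddGroup G] [Fintype G] [AddCommGroup M]
    (g : G → M) (a : G) : ∑ x, (g x - g (x + a)) = 0 := by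
  rw [Finset.sum_sub_distrib,
    Fintype.sum_equiv (Equiv.addRight a) (fun x => g (x + a)) g fun _ => rfl, sub_self]

theorem swapConf_involutive {N : ℕ} (x : ZMod N) :
    Function.Involutive (swapConf · x) := by
  intro η
  funext z
  simp only [swapConf]
  split_ifs <;> simp_all

@[simp]
theorem swapConf_apply_self {N : ℕ} (η : ZMod N → Species) (x : ZMod N) :
    swapConf η x x = η (x + 1) := by
  simp [swapConf]

@[simp]
theorem swapConf_apply_add_one {N : ℕ} (η : ZMod N → Species) (x : ZMod N) :
    swapConf η x (x + 1) = η x := by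
  by_cases h : x + 1 = x <;> simp [swapConf, h]

theorem bondRate_eq {N : ℕ} (crate : Species → Species → ℝ)
    (η : ZMod N → Species) (x : ZMod N) :
    bondRate crate η x = if η x = η (x + 1) then 0 else crate (η x) (η (x + 1)) := by
  simp [bondRate]

def ratePotential (crate : Species → Species → ℝ) : Species → ℝ
  | A => 0
  | B => crate A B - crate B A
  | C => crate A C - crate C A

theorem bondRate_swapConf_sub {N : ℕ} {crate : Species → Species → ℝ}
    (hbal : crate A B + crate B C + crate C A = crate B A + crate C B + crate A C)
    (η : ZMod N → Species) (x : ZMod N) :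
    bondRate crate (swapConf η x) x - bondRate crate η x =
      ratePotential crate (η x) - ratePotential crate (η (x + 1)) := by
  rw [bondRate_eq, bondRate_eq, swapConf_apply_self, swapConf_apply_add_one]
  cases η x <;> cases η (x + 1) <;> simp [ratePotential] <;> linarith

theorem transposition_invariant_measure_is_invariant_general
    (N : ℕ) [NeZero N] (crate : Species → Species → ℝ)
    (hbal : crate A B + crate B C + crate C A = crate B A + crate C B + crate A C)
    (μ : (ZMod N → Species) → ℝ)
    (hinv : ∀ (η : ZMod N → Species) (x : ZMod N), μ (swapConf η x) = μ η) :
    ∀ f : (ZMod N → Species) → ℝ,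
      ∑ η : ZMod N → Species, μ η * generator crate f η = 0 := by
  intro f
  calc ∑ η, μ η * generator crate f η
      = ∑ x, ∑ η, μ η * (bondRate crate η x * (f (swapConf η x) - f η)) := by
        simp only [generator, Finset.mul_sum]
        exact Finset.sum_comm
    _ = ∑ x, ∑ η, μ η * f η * (ratePotential crate (η x) - ratePotential crate (η (x + 1))) := by
        refine Finset.sum_congr rfl fun x _ => ?_
        rw [sum_mul_mul_sub_comp_of_involutive (swapConf_involutive x) (hinv · x)]
        simp only [bondRate_swapConf_sub hbal]
    _ = ∑ η, μ η * f η * ∑ x, (ratePotential crate (η x) - ratePotential crate (η (x + 1))) := by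
        rw [Finset.sum_comm]
        simp only [Finset.mul_sum]
    _ = 0 := by
        simp only [sum_sub_comp_add_eq_zero, mul_zero, Finset.sum_const_zero]

/-- If the rates are nonnegative and satisfy the pairwise balance
`c^{AB} + c^{BC} + c^{CA} = c^{BA} + c^{CB} + c^{AC}`, then any probability measure `μ`
on `{A,B,C}^{ℤ/Nℤ}` that is invariant under every nearest-neighbour transposition is
invariant for the generator `L`: `Σ_η μ(η) L f(η) = 0` for every `f`. -/
theorem transposition_invariant_measure_is_invariant
    (N : ℕ) [NeZero N] (crate : Species → Species → ℝ)
    (hpos : ∀ α β, 0 ≤ crate α β)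
    (hbal : crate A B + crate B C + crate C A = crate B A + crate C B + crate A C)
    (μ : (ZMod N → Species) → ℝ)
    (hμpos : ∀ η, 0 ≤ μ η) (hμsum : ∑ η : ZMod N → Species, μ η = 1)
    (hinv : ∀ (η : ZMod N → Species) (x : ZMod N), μ (swapConf η x) = μ η) :
    ∀ f : (ZMod N → Species) → ℝ,
      ∑ η : ZMod N → Species, μ η * generator crate f η = 0 :=
  transposition_invariant_measure_is_invariant_general N crate hbal μ hinv
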